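/- arXiv:1504.02887 — 3 statements merged into one kernel-verified Lean document; each statement's English description precedes it below -/
import Mathlib

section
/- Let d ≥ 1 and n ≥ 1 be integers, let C : ℝ^d → ℝ be d times continuously differentiable on an open set containing [0,1]^d, and let 1 ≤ k ≤ d−1 and 1 ≤ j ≤ min(k,n). Then for every u = (u_1,…,u_d) with u_j ∈ (0,1) for all j, the partial derivative with respect to u_{k+1} of the map u ↦ ∑_{𝒫∈𝒮_{k,j}} ∏_{M∈𝒫} ∂_M C(u_1^{1/n},…,u_d^{1/n}) equals (1/n) · u_{k+1}^{1/n−1} · ∑_{𝒫∈𝒮_{k+1,j}, {k+1}∉𝒫} ∏_{M∈𝒫} ∂_M C(u_1^{1/n},…,u_d^{1/n}), where the inner sum ranges over all partitions of {1,…,k+1} into exactly j blocks such that {k+1} is not a singleton block of the partition. -/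
open scoped Classical

noncomputable section

/-- Partial derivative of `f : ℝ^d → ℝ` with respect to the `i`-th coordinate. -/
def coordPartial {d : ℕ} (i : Fin d) (f : (Fin d → ℝ) → ℝ) : (Fin d → ℝ) → ℝ :=
  fun x => deriv (fun t => f (Function.update x i t)) (x i)

/-- Mixed partial derivative `∂_M f`, taken once with respect to each coordinate in `M`
(in increasing order of the indices). -/
def mixedPartial {d : ℕ} (M : Finset (Fin d)) (f : (Fin d → ℝ) → ℝ) : (Fin d → ℝ) → ℝ :=
  (M.sort (· ≤ ·)).foldr coordPartial f

/-- The iterated mixed partial derivative `∂^k/∂u₁⋯∂u_k` with respect to the first `k`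
coordinates. -/
def iterPartial {d : ℕ} (k : ℕ) (f : (Fin d → ℝ) → ℝ) : (Fin d → ℝ) → ℝ :=
  ((List.finRange d).take k).foldr coordPartial f

/-- `𝒮_{s,j}`: the set of set-partitions of the ground set `s` into exactly `j` nonempty
blocks, encoded as finsets of pairwise disjoint nonempty blocks whose union is `s`. -/
def setPartitions {d : ℕ} (s : Finset (Fin d)) (j : ℕ) : Finset (Finset (Finset (Fin d))) :=
  Finset.univ.filter fun P =>
    (↑P : Set (Finset (Fin d))).PairwiseDisjoint id ∧
    (∀ M ∈ P, M.Nonempty) ∧ P.sup id = s ∧ P.card = j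

/-!
Write `x = u^{1/n}`. By the chain rule, the `u_{k+1}`-derivative is `(1/n) u_{k+1}^{1/n-1}` times
the `x_{k+1}`-derivative of `∑_𝒫 ∏_{M∈𝒫} ∂_M C(x)`. By the Leibniz rule the latter is a sum over
pairs `(𝒫, M ∈ 𝒫)` of the product in which `∂_M C` is replaced by `∂_{k+1} ∂_M C = ∂_{M ∪ {k+1}} C`;
here mixed partials commute because `C` is `C^d` and `|M| + 1 ≤ d`. Finally, adding `k+1` to the
block `M` of `𝒫 ∈ 𝒮_{k,j}` is a bijection from these pairs onto the partitions in `𝒮_{k+1,j}` that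
do not have `{k+1}` as a block.
-/

theorem Finset.sort_insert_of_forall_lt {α : Type*} [LinearOrder α] {s : Finset α} {a : α}
    (h : ∀ b ∈ s, b < a) : (insert a s).sort (· ≤ ·) = s.sort (· ≤ ·) ++ [a] := by
  refine List.Pairwise.eq_of_mem_iff (r := (· < ·)) (Finset.sortedLT_sort _).pairwise ?_ ?_
  · exact List.pairwise_append.2 ⟨(Finset.sortedLT_sort _).pairwise, List.pairwise_singleton _ _,
      fun b hb c hc => List.mem_singleton.1 hc ▸ h b ((Finset.mem_sort _).1 hb)⟩
  · simp [or_comm]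

theorem Finset.sup_id_eq_union_sup_erase {α : Type*} [DecidableEq α] {P : Finset (Finset α)}
    {M : Finset α} (hM : M ∈ P) : P.sup id = M ∪ (P.erase M).sup id := by
  conv_lhs => rw [← Finset.insert_erase hM]
  exact Finset.sup_insert

theorem hasDerivAt_sum_prod {ι : Type*} [DecidableEq ι] {A : Finset (Finset ι)}
    {g : ι → ℝ → ℝ} {g' : ι → ℝ} {t : ℝ}
    (hg : ∀ P ∈ A, ∀ M ∈ P, HasDerivAt (g M) (g' M) t) :
    HasDerivAt (fun s => ∑ P ∈ A, ∏ M ∈ P, g M s)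
      (∑ P ∈ A, ∑ M ∈ P, g' M * ∏ M' ∈ P.erase M, g M' t) t := by
  refine HasDerivAt.fun_sum fun P hP => ?_
  simpa only [smul_eq_mul, mul_comm] using HasDerivAt.fun_finsetProd (hg P hP)

structure IsSetPartition {α : Type*} [DecidableEq α] (P : Finset (Finset α)) (s : Finset α) :
    Prop where
  pairwiseDisjoint : (P : Set (Finset α)).PairwiseDisjoint id
  nonempty : ∀ M ∈ P, M.Nonempty
  sup_eq : P.sup id = s

theorem mem_setPartitions {d : ℕ} {s : Finset (Fin d)} {j : ℕ} {P : Finset (Finset (Fin d))} :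
    P ∈ setPartitions s j ↔ IsSetPartition P s ∧ P.card = j := by
  simp only [setPartitions, Finset.mem_filter, Finset.mem_univ, true_and]
  exact ⟨fun ⟨h₁, h₂, h₃, h₄⟩ => ⟨⟨h₁, h₂, h₃⟩, h₄⟩,
    fun ⟨⟨h₁, h₂, h₃⟩, h₄⟩ => ⟨h₁, h₂, h₃, h₄⟩⟩

namespace IsSetPartition

variable {α : Type*} [DecidableEq α] {P : Finset (Finset α)} {s M B : Finset α} {a : α}

theorem subset (hP : IsSetPartition P s) (hM : M ∈ P) : M ⊆ s :=
  hP.sup_eq ▸ Finset.le_sup (f := id) hM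

theorem notMem_of_notMem (hP : IsSetPartition P s) (ha : a ∉ s) (hM : M ∈ P) : a ∉ M :=
  fun h => ha (hP.subset hM h)

theorem exists_mem_of_mem (hP : IsSetPartition P s) (ha : a ∈ s) : ∃ B ∈ P, a ∈ B := by
  rw [← hP.sup_eq] at ha
  simpa using Finset.mem_sup.1 ha

theorem insert_notMem_erase (hP : IsSetPartition P s) (ha : a ∉ s) : insert a M ∉ P.erase M :=
  fun h => hP.notMem_of_notMem ha (Finset.mem_of_mem_erase h) (Finset.mem_insert_self a M)

theorem singleton_notMem (hP : IsSetPartition P s) (ha : a ∉ s) : {a} ∉ P :=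
  fun h => hP.notMem_of_notMem ha h (Finset.mem_singleton_self a)

theorem erase_notMem_erase (hP : IsSetPartition P s) (hB : B ∈ P) : B.erase a ∉ P.erase B := by
  intro h
  obtain ⟨hne, hmem⟩ := Finset.mem_erase.1 h
  obtain ⟨b, hb⟩ := hP.nonempty _ hmem
  exact Finset.disjoint_left.1 (hP.pairwiseDisjoint hmem hB hne) hb (Finset.mem_of_mem_erase hb)

theorem insert_insert_erase (hP : IsSetPartition P s) (ha : a ∉ s) (hM : M ∈ P) :
    IsSetPartition (insert (insert a M) (P.erase M)) (insert a s) where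
  pairwiseDisjoint := by
    rw [Finset.coe_insert]
    refine (hP.pairwiseDisjoint.subset (Finset.coe_subset.2 (Finset.erase_subset _ _))).insert
      fun B hB _ => ?_
    obtain ⟨hBM, hB⟩ := Finset.mem_erase.1 (Finset.mem_coe.1 hB)
    exact Finset.disjoint_insert_left.2
      ⟨hP.notMem_of_notMem ha hB, hP.pairwiseDisjoint hM hB (Ne.symm hBM)⟩
  nonempty B hB := by
    rcases Finset.mem_insert.1 hB with rfl | hB
    · exact Finset.insert_nonempty a M
    · exact hP.nonempty B (Finset.mem_of_mem_erase hB)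
  sup_eq := by
    rw [Finset.sup_insert, ← hP.sup_eq, Finset.sup_id_eq_union_sup_erase hM]
    exact Finset.insert_union a M _

theorem card_insert_insert_erase (hP : IsSetPartition P s) (ha : a ∉ s) (hM : M ∈ P) :
    (insert (insert a M) (P.erase M)).card = P.card := by
  rw [Finset.card_insert_of_notMem (hP.insert_notMem_erase ha), Finset.card_erase_add_one hM]

theorem singleton_notMem_insert_insert_erase (hP : IsSetPartition P s) (ha : a ∉ s)
    (hM : M ∈ P) : {a} ∉ insert (insert a M) (P.erase M) := by
  rw [Finset.mem_insert, not_or]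
  refine ⟨fun h => ?_, fun h => hP.singleton_notMem ha (Finset.mem_of_mem_erase h)⟩
  obtain ⟨b, hb⟩ := hP.nonempty M hM
  have hba : b = a := Finset.mem_singleton.1 (h ▸ Finset.mem_insert_of_mem hb)
  exact hP.notMem_of_notMem ha hM (hba ▸ hb)

theorem insert_erase_erase (hP : IsSetPartition P (insert a s)) (ha : a ∉ s) (hB : B ∈ P)
    (haB : a ∈ B) (hsingle : {a} ∉ P) :
    IsSetPartition (insert (B.erase a) (P.erase B)) s where
  pairwiseDisjoint := by
    rw [Finset.coe_insert]
    refine (hP.pairwiseDisjoint.subset (Finset.coe_subset.2 (Finset.erase_subset _ _))).insert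
      fun C hC _ => ?_
    obtain ⟨hCB, hC⟩ := Finset.mem_erase.1 (Finset.mem_coe.1 hC)
    exact (hP.pairwiseDisjoint hB hC (Ne.symm hCB)).mono_left (Finset.erase_subset a B)
  nonempty C hC := by
    rcases Finset.mem_insert.1 hC with rfl | hC
    · refine Finset.nonempty_iff_ne_empty.2 fun h => ?_
      rcases (Finset.erase_eq_empty_iff _ _).1 h with rfl | rfl
      exacts [Finset.notMem_empty a haB, hsingle hB]
    · exact hP.nonempty C (Finset.mem_of_mem_erase hC)
  sup_eq := by
    have haX : a ∉ (P.erase B).sup id := by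
      simp only [Finset.mem_sup, id, not_exists, not_and]
      intro C hC haC
      obtain ⟨hCB, hC⟩ := Finset.mem_erase.1 hC
      exact Finset.disjoint_left.1 (hP.pairwiseDisjoint hB hC (Ne.symm hCB)) haB haC
    rw [Finset.sup_insert, ← Finset.erase_insert ha, ← hP.sup_eq,
      Finset.sup_id_eq_union_sup_erase hB, Finset.erase_union_distrib,
      Finset.erase_eq_of_notMem haX]
    rfl

theorem eq_insert_of_mem_insert_insert_erase (hP : IsSetPartition P s) (ha : a ∉ s)
    (hB : B ∈ insert (insert a M) (P.erase M)) (haB : a ∈ B) : B = insert a M := by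
  rcases Finset.mem_insert.1 hB with rfl | hB
  · rfl
  · exact absurd haB (hP.notMem_of_notMem ha (Finset.mem_of_mem_erase hB))

end IsSetPartition

theorem sum_setPartitions_sum_mul_prod_erase {d : ℕ} {R : Type*} [CommSemiring R]
    {S : Finset (Fin d)} {K : Fin d} (hK : K ∉ S) (j : ℕ) (D : Finset (Fin d) → R) :
    ∑ P ∈ setPartitions S j, ∑ M ∈ P, D (insert K M) * ∏ M' ∈ P.erase M, D M' =
      ∑ P ∈ (setPartitions (insert K S) j).filter (fun P => {K} ∉ P), ∏ M ∈ P, D M := by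
  rw [Finset.sum_sigma']
  refine Finset.sum_bij (fun x _ => insert (insert K x.2) (x.1.erase x.2)) ?_ ?_ ?_ ?_
  · rintro ⟨P, M⟩ h
    obtain ⟨hP, hM⟩ := Finset.mem_sigma.1 h
    obtain ⟨hP, hcard⟩ := mem_setPartitions.1 hP
    exact Finset.mem_filter.2 ⟨mem_setPartitions.2 ⟨hP.insert_insert_erase hK hM,
      (hP.card_insert_insert_erase hK hM).trans hcard⟩,
      hP.singleton_notMem_insert_insert_erase hK hM⟩
  · rintro ⟨P₁, M₁⟩ h₁ ⟨P₂, M₂⟩ h₂ heq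
    obtain ⟨hP₁, hM₁⟩ := Finset.mem_sigma.1 h₁
    obtain ⟨hP₂, hM₂⟩ := Finset.mem_sigma.1 h₂
    replace hP₁ := (mem_setPartitions.1 hP₁).1
    replace hP₂ := (mem_setPartitions.1 hP₂).1
    dsimp only at heq hM₁ hM₂
    have hKM : insert K M₂ = insert K M₁ :=
      hP₁.eq_insert_of_mem_insert_insert_erase hK (heq ▸ Finset.mem_insert_self _ _)
        (Finset.mem_insert_self _ _)
    obtain rfl : M₁ = M₂ := by
      rw [← Finset.erase_insert (hP₁.notMem_of_notMem hK hM₁),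
        ← Finset.erase_insert (hP₂.notMem_of_notMem hK hM₂), hKM]
    have hP : P₁.erase M₁ = P₂.erase M₁ := by
      rw [← Finset.erase_insert (hP₁.insert_notMem_erase hK),
        ← Finset.erase_insert (hP₂.insert_notMem_erase hK), heq]
    rw [← Finset.insert_erase hM₁, ← Finset.insert_erase hM₂, hP]
  · intro P h
    obtain ⟨hP, hsingle⟩ := Finset.mem_filter.1 h
    obtain ⟨hP, hcard⟩ := mem_setPartitions.1 hP
    obtain ⟨B, hB, hKB⟩ := hP.exists_mem_of_mem (Finset.mem_insert_self K S)
    have hnotMem := hP.erase_notMem_erase (a := K) hB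
    refine ⟨⟨insert (B.erase K) (P.erase B), B.erase K⟩, Finset.mem_sigma.2
      ⟨mem_setPartitions.2 ⟨hP.insert_erase_erase hK hB hKB hsingle, ?_⟩,
        Finset.mem_insert_self _ _⟩, ?_⟩
    · rw [Finset.card_insert_of_notMem hnotMem, Finset.card_erase_add_one hB, hcard]
    · dsimp only
      rw [Finset.insert_erase hKB, Finset.erase_insert hnotMem, Finset.insert_erase hB]
  · rintro ⟨P, M⟩ h
    obtain ⟨hP, -⟩ := Finset.mem_sigma.1 h
    rw [Finset.prod_insert ((mem_setPartitions.1 hP).1.insert_notMem_erase hK)]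

section PartialDerivatives

variable {d : ℕ} {U : Set (Fin d → ℝ)} {f g : (Fin d → ℝ) → ℝ} {x : Fin d → ℝ}

theorem hasDerivAt_comp_update (i : Fin d) (hf : DifferentiableAt ℝ f x) :
    HasDerivAt (fun t => f (Function.update x i t)) (fderiv ℝ f x (Pi.single i 1)) (x i) := by
  have hf' : HasFDerivAt f (fderiv ℝ f x) (Function.update x i (x i)) := by
    rw [Function.update_eq_self]
    exact hf.hasFDerivAt
  exact hf'.comp_hasDerivAt (x i) (hasDerivAt_update x i (x i))

theorem coordPartial_eq_fderiv (i : Fin d) (hf : DifferentiableAt ℝ f x) :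
    coordPartial i f x = fderiv ℝ f x (Pi.single i 1) :=
  (hasDerivAt_comp_update i hf).deriv

theorem hasDerivAt_coordPartial (i : Fin d) (hf : DifferentiableAt ℝ f x) :
    HasDerivAt (fun t => f (Function.update x i t)) (coordPartial i f x) (x i) :=
  (hasDerivAt_comp_update i hf).differentiableAt.hasDerivAt

theorem coordPartial_congr (hU : IsOpen U) (hx : x ∈ U) (i : Fin d) (h : Set.EqOn f g U) :
    coordPartial i f x = coordPartial i g x := by
  have hcont : Continuous (Function.update x i) := continuous_const.update i continuous_id
  have hmem : Function.update x i ⁻¹' U ∈ nhds (x i) :=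
    hcont.continuousAt.preimage_mem_nhds (by rw [Function.update_eq_self]; exact hU.mem_nhds hx)
  exact Filter.EventuallyEq.deriv_eq (Filter.mem_of_superset hmem fun t ht => h ht)

theorem contDiffOn_coordPartial {m : ℕ} (hU : IsOpen U) (i : Fin d)
    (hf : ContDiffOn ℝ (m + 1 : ℕ) f U) : ContDiffOn ℝ m (coordPartial i f) U := by
  have hfd : ContDiffOn ℝ m (fun y => fderiv ℝ f y (Pi.single i 1)) U :=
    (hf.fderiv_of_isOpen hU (by norm_cast)).clm_apply contDiffOn_const
  exact hfd.congr fun y hy => coordPartial_eq_fderiv i <|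
    (hf.contDiffAt (hU.mem_nhds hy)).differentiableAt (by simp)

theorem contDiffOn_foldr_coordPartial {m : ℕ} (hU : IsOpen U) (l : List (Fin d))
    (hf : ContDiffOn ℝ (m + l.length : ℕ) f U) :
    ContDiffOn ℝ m (l.foldr coordPartial f) U := by
  induction l generalizing m with
  | nil => simpa using hf
  | cons a l ih =>
    refine contDiffOn_coordPartial hU a (ih ?_)
    rwa [List.length_cons, ← add_assoc, Nat.add_right_comm] at hf

theorem coordPartial_coordPartial_eq_fderiv_fderiv (hU : IsOpen U) (hx : x ∈ U)
    (hf : ContDiffOn ℝ 2 f U) (i l : Fin d) :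
    coordPartial i (coordPartial l f) x =
      fderiv ℝ (fderiv ℝ f) x (Pi.single i 1) (Pi.single l 1) := by
  have hf' : DifferentiableAt ℝ (fderiv ℝ f) x :=
    ((hf.fderiv_of_isOpen (m := 1) hU (by norm_num)).contDiffAt (hU.mem_nhds hx)).differentiableAt
      (by norm_num)
  have hagree : Set.EqOn (coordPartial l f) (fun y => fderiv ℝ f y (Pi.single l 1)) U :=
    fun y hy => coordPartial_eq_fderiv l
      ((hf.contDiffAt (hU.mem_nhds hy)).differentiableAt (by norm_num))
  rw [coordPartial_congr hU hx i hagree,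
    coordPartial_eq_fderiv i (hf'.clm_apply (differentiableAt_const _)),
    fderiv_clm_apply hf' (differentiableAt_const _)]
  simp

theorem coordPartial_comm (hU : IsOpen U) (hx : x ∈ U) (hf : ContDiffOn ℝ 2 f U) (i l : Fin d) :
    coordPartial i (coordPartial l f) x = coordPartial l (coordPartial i f) x := by
  rw [coordPartial_coordPartial_eq_fderiv_fderiv hU hx hf,
    coordPartial_coordPartial_eq_fderiv_fderiv hU hx hf]
  exact (hf.contDiffAt (hU.mem_nhds hx)).isSymmSndFDerivAt (by simp) _ _

theorem coordPartial_foldr_comm (hU : IsOpen U) (i : Fin d) (l : List (Fin d))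
    (hf : ContDiffOn ℝ (l.length + 1 : ℕ) f U) :
    Set.EqOn (coordPartial i (l.foldr coordPartial f))
      (l.foldr coordPartial (coordPartial i f)) U := by
  induction l with
  | nil => exact fun _ _ => rfl
  | cons a l ih =>
    intro y hy
    have hl : ContDiffOn ℝ 2 (l.foldr coordPartial f) U :=
      contDiffOn_foldr_coordPartial hU l (by simpa [add_comm, add_left_comm] using hf)
    exact (coordPartial_comm hU hy hl i a).trans
      (coordPartial_congr hU hy a (ih (hf.of_le (by simp))))

theorem mixedPartial_insert_of_forall_lt {M : Finset (Fin d)} {K : Fin d} (h : ∀ a ∈ M, a < K) :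
    mixedPartial (insert K M) f = mixedPartial M (coordPartial K f) := by
  rw [mixedPartial, Finset.sort_insert_of_forall_lt h, List.foldr_append]
  rfl

theorem hasDerivAt_mixedPartial_update (hU : IsOpen U) (hx : x ∈ U) {M : Finset (Fin d)}
    {K : Fin d} (h : ∀ a ∈ M, a < K) (hf : ContDiffOn ℝ (M.card + 1 : ℕ) f U) :
    HasDerivAt (fun t => mixedPartial M f (Function.update x K t))
      (mixedPartial (insert K M) f x) (x K) := by
  have hsort : ContDiffOn ℝ ((M.sort (· ≤ ·)).length + 1 : ℕ) f U := by
    rwa [Finset.length_sort]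
  have hdiff : DifferentiableAt ℝ (mixedPartial M f) x :=
    ((contDiffOn_foldr_coordPartial (m := 1) hU _ (by rwa [add_comm])).contDiffAt
      (hU.mem_nhds hx)).differentiableAt (by norm_num)
  rw [mixedPartial_insert_of_forall_lt h]
  unfold mixedPartial
  rw [← coordPartial_foldr_comm hU K _ hsort hx]
  exact hasDerivAt_coordPartial K hdiff

theorem coordPartial_comp_rpow {F : (Fin d → ℝ) → ℝ} {u : Fin d → ℝ} {q F' : ℝ}
    (i : Fin d) (hu : u i ≠ 0 ∨ 1 ≤ q)
    (hF : HasDerivAt (fun t => F (Function.update (fun l => u l ^ q) i t)) F' (u i ^ q)) :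
    coordPartial i (fun v => F (fun l => v l ^ q)) u = q * u i ^ (q - 1) * F' := by
  have hupdate : ∀ t : ℝ, (fun l => Function.update u i t l ^ q) =
      Function.update (fun l => u l ^ q) i (t ^ q) := fun t => by
    funext l
    rcases eq_or_ne l i with rfl | h <;> simp [*]
  have := hF.comp (u i) (Real.hasDerivAt_rpow_const hu)
  simp only [coordPartial, hupdate]
  rw [mul_comm]
  exact this.deriv

end PartialDerivatives

/-- Equation (8) of the paper: for `1 ≤ k ≤ d-1` and `1 ≤ j ≤ min(k,n)`,
the partial derivative with respect to `u_{k+1}` of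
`u ↦ ∑_{𝒫∈𝒮_{k,j}} ∏_{M∈𝒫} ∂_M C(u₁^{1/n},…,u_d^{1/n})` equals
`(1/n) u_{k+1}^{1/n-1} ∑_{𝒫∈𝒮_{k+1,j}, {k+1}∉𝒫} ∏_{M∈𝒫} ∂_M C(u^{1/n})`,
where the sum ranges over partitions of `{1,…,k+1}` into `j` blocks for which `{k+1}`
is not a singleton block. (Here `u_{k+1}` is the coordinate of index `k` in `Fin d`.) -/
theorem blockMaxima_partition_sum_deriv (d n k j : ℕ) (hkd : k + 1 ≤ d)
    (C : (Fin d → ℝ) → ℝ)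
    (U : Set (Fin d → ℝ)) (hU : IsOpen U) (hUsub : Set.Icc (0 : Fin d → ℝ) 1 ⊆ U)
    (hC : ContDiffOn ℝ d C U)
    (u : Fin d → ℝ) (hu : ∀ i, u i ∈ Set.Ioo (0:ℝ) 1) :
    coordPartial (⟨k, by omega⟩ : Fin d)
        (fun v => ∑ P ∈ setPartitions (Finset.univ.filter (fun i : Fin d => (i : ℕ) < k)) j,
          ∏ M ∈ P, mixedPartial M C (fun i => v i ^ ((1:ℝ)/n))) u =
      (1 / (n : ℝ)) * u (⟨k, by omega⟩ : Fin d) ^ ((1:ℝ)/n - 1) *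
        ∑ P ∈ (setPartitions (Finset.univ.filter (fun i : Fin d => (i : ℕ) < k + 1)) j).filter
            (fun P => {(⟨k, by omega⟩ : Fin d)} ∉ P),
          ∏ M ∈ P, mixedPartial M C (fun i => u i ^ ((1:ℝ)/n)) := by
  set K : Fin d := ⟨k, by omega⟩
  set S := Finset.univ.filter fun i : Fin d => (i : ℕ) < k
  set x : Fin d → ℝ := fun i => u i ^ ((1:ℝ)/n)
  have hKS : K ∉ S := by simp [S, K]
  have hS : insert K S = Finset.univ.filter fun i : Fin d => (i : ℕ) < k + 1 := by
    ext i
    simp only [Finset.mem_insert, Finset.mem_filter, Finset.mem_univ, true_and, S, K, Fin.ext_iff]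
    omega
  have hxU : x ∈ U := hUsub ⟨fun i => Real.rpow_nonneg (hu i).1.le _,
    fun i => Real.rpow_le_one (hu i).1.le (hu i).2.le (by positivity)⟩
  have hblock : ∀ P ∈ setPartitions S j, ∀ M ∈ P,
      HasDerivAt (fun t => mixedPartial M C (Function.update x K t))
        (mixedPartial (insert K M) C x) (x K) := by
    intro P hP M hM
    have hMS := (mem_setPartitions.1 hP).1.subset hM
    have hMK : ∀ a ∈ M, a < K := fun a ha => Fin.lt_def.2 (Finset.mem_filter.1 (hMS ha)).2
    refine hasDerivAt_mixedPartial_update hU hxU hMK (hC.of_le ?_)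
    have := Finset.card_le_univ (insert K M)
    rw [Finset.card_insert_of_notMem fun h => hKS (hMS h), Fintype.card_fin] at this
    exact_mod_cast this
  refine (coordPartial_comp_rpow (F := fun y => ∑ P ∈ setPartitions S j, ∏ M ∈ P,
    mixedPartial M C y) K (Or.inl (hu K).1.ne') (hasDerivAt_sum_prod hblock)).trans ?_
  rw [← hS, ← sum_setPartitions_sum_mul_prod_erase hKS]
  simp only [Function.update_eq_self]
  rfl

end
end

section
/- For all (u_1,u_2,u_3) with u_1 ∈ (0,1) and u_2,u_3 ∈ [0,1], the partial derivative of the three-dimensional vine copula C with respect to u_1 satisfies ∂C(u_1,u_2,u_3)/∂u_1 = ∫_0^{u_2} ∂₁C_{13;2}( C_{1|2}(u_1|v_2), C_{3|2}(u_3|v_2) ) · c_{12}(u_1,v_2) dv_2. -/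
/-!
Integrating out `v₃`: by the chain rule and the symmetry of mixed partial derivatives,
`c₁₃;₂(x, C_{3|2}(v₃|v₂)) c₂₃(v₂,v₃)` is the `v₃`-derivative of `∂₁C₁₃;₂(x, C_{3|2}(v₃|v₂))`, which
vanishes at `v₃ = 0` by the boundary conditions. Hence
`C(u₁,u₂,u₃) = ∫₀^{u₁}∫₀^{u₂} c₁₂(v₁,v₂) ∂₁C₁₃;₂(C_{1|2}(v₁|v₂), C_{3|2}(u₃|v₂)) dv₂ dv₁`. The new
integrand is jointly continuous on the unit square, so the inner integral is continuous in `v₁`, and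
the fundamental theorem of calculus in `v₁` gives the formula at interior points `u₁`.
-/

noncomputable section

/-- The density of a bivariate copula: the mixed second partial derivative `∂²C/∂s∂t`. -/
def copDens (C : ℝ × ℝ → ℝ) (s t : ℝ) : ℝ :=
  deriv (fun a => deriv (fun b => C (a, b)) t) s

/-- The conditional distribution function `C_{1|2}(u₁|u₂) = ∂C₁₂(u₁,u₂)/∂u₂`. -/
def cond12 (C12 : ℝ × ℝ → ℝ) (u1 u2 : ℝ) : ℝ :=
  deriv (fun b => C12 (u1, b)) u2

/-- The conditional distribution function `C_{3|2}(u₃|u₂) = ∂C₂₃(u₂,u₃)/∂u₂`. -/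
def cond32 (C23 : ℝ × ℝ → ℝ) (u3 u2 : ℝ) : ℝ :=
  deriv (fun a => C23 (a, u3)) u2

/-- `∂₁C(x,y) = ∂C(x,y)/∂x`. -/
def pdFst (C : ℝ × ℝ → ℝ) (x y : ℝ) : ℝ := deriv (fun a => C (a, y)) x

/-- `∂₃C(x,y) = ∂C(x,y)/∂y` (derivative in the second argument). -/
def pdSnd (C : ℝ × ℝ → ℝ) (x y : ℝ) : ℝ := deriv (fun b => C (x, b)) y

/-- The three-dimensional vine copula built from the pair copulas `C₁₂, C₂₃, C₁₃;₂`: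
`C(u₁,u₂,u₃) = ∫₀^{u₁}∫₀^{u₂}∫₀^{u₃} c₁₂(v₁,v₂) c₂₃(v₂,v₃)
  c₁₃;₂(C_{1|2}(v₁|v₂), C_{3|2}(v₃|v₂)) dv₃ dv₂ dv₁`. -/
def vine (C12 C23 C132 : ℝ × ℝ → ℝ) (u1 u2 u3 : ℝ) : ℝ :=
  ∫ v1 in (0:ℝ)..u1, ∫ v2 in (0:ℝ)..u2, ∫ v3 in (0:ℝ)..u3,
    copDens C12 v1 v2 * copDens C23 v2 v3 *
      copDens C132 (cond12 C12 v1 v2) (cond32 C23 v3 v2)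

open Set Filter Topology MeasureTheory intervalIntegral Function

section PartialDerivatives

variable {E : Type*} [NormedAddCommGroup E] [NormedSpace ℝ E] {x y : ℝ}

theorem DifferentiableAt.hasDerivAt_comp_prodMk_left {g : ℝ × ℝ → E}
    (h : DifferentiableAt ℝ g (x, y)) :
    HasDerivAt (fun a => g (a, y)) (fderiv ℝ g (x, y) (1, 0)) x :=
  h.hasFDerivAt.comp_hasDerivAt x ((hasDerivAt_id x).prodMk (hasDerivAt_const x y))

theorem DifferentiableAt.hasDerivAt_comp_prodMk_right {g : ℝ × ℝ → E}
    (h : DifferentiableAt ℝ g (x, y)) :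
    HasDerivAt (fun b => g (x, b)) (fderiv ℝ g (x, y) (0, 1)) y :=
  h.hasFDerivAt.comp_hasDerivAt y ((hasDerivAt_const y x).prodMk (hasDerivAt_id y))

variable {C : ℝ × ℝ → ℝ}

theorem ContDiffAt.eventually_differentiableAt {n : WithTop ℕ∞} {p : ℝ × ℝ}
    (hC : ContDiffAt ℝ n C p) (hn : 1 ≤ n) : ∀ᶠ q in 𝓝 p, DifferentiableAt ℝ C q := by
  filter_upwards [(hC.of_le hn).eventually (by simp)] with q hq
  exact hq.differentiableAt one_ne_zero

theorem pdFst_eq_fderiv (h : DifferentiableAt ℝ C (x, y)) :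
    pdFst C x y = fderiv ℝ C (x, y) (1, 0) :=
  h.hasDerivAt_comp_prodMk_left.deriv

theorem pdSnd_eq_fderiv (h : DifferentiableAt ℝ C (x, y)) :
    pdSnd C x y = fderiv ℝ C (x, y) (0, 1) :=
  h.hasDerivAt_comp_prodMk_right.deriv

theorem ContDiffAt.continuousAt_pdFst {p : ℝ × ℝ} (hC : ContDiffAt ℝ 1 C p) :
    ContinuousAt (uncurry (pdFst C)) p := by
  have hfd : ContinuousAt (fun q => fderiv ℝ C q (1, 0)) p :=
    (hC.fderiv_right (m := 0) (by norm_num)).continuousAt.clm_apply continuousAt_const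
  refine hfd.congr ?_
  filter_upwards [hC.eventually_differentiableAt le_rfl] with q hq
  exact (pdFst_eq_fderiv hq).symm

theorem ContDiffAt.continuousAt_pdSnd {p : ℝ × ℝ} (hC : ContDiffAt ℝ 1 C p) :
    ContinuousAt (uncurry (pdSnd C)) p := by
  have hfd : ContinuousAt (fun q => fderiv ℝ C q (0, 1)) p :=
    (hC.fderiv_right (m := 0) (by norm_num)).continuousAt.clm_apply continuousAt_const
  refine hfd.congr ?_
  filter_upwards [hC.eventually_differentiableAt le_rfl] with q hq
  exact (pdSnd_eq_fderiv hq).symm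

theorem ContDiffAt.copDens_eq_fderiv_fderiv (hC : ContDiffAt ℝ 2 C (x, y)) :
    copDens C x y = fderiv ℝ (fderiv ℝ C) (x, y) (1, 0) (0, 1) := by
  have hd2 : DifferentiableAt ℝ (fderiv ℝ C) (x, y) :=
    (hC.fderiv_right (m := 1) (by norm_num)).differentiableAt one_ne_zero
  have hslice : ∀ᶠ a in 𝓝 x, DifferentiableAt ℝ C (a, y) :=
    (continuousAt_id.prodMk continuousAt_const).eventually
      (hC.eventually_differentiableAt one_le_two)
  have heq : (fun a => pdSnd C a y) =ᶠ[𝓝 x] fun a => fderiv ℝ C (a, y) (0, 1) := by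
    filter_upwards [hslice] with a ha using pdSnd_eq_fderiv ha
  exact heq.deriv_eq.trans (hd2.hasDerivAt_comp_prodMk_left.clm_apply (hasDerivAt_const x _)
    |>.deriv.trans (by simp))

theorem ContDiffAt.hasDerivAt_pdFst (hC : ContDiffAt ℝ 2 C (x, y)) :
    HasDerivAt (pdFst C x) (copDens C x y) y := by
  have hd2 : DifferentiableAt ℝ (fderiv ℝ C) (x, y) :=
    (hC.fderiv_right (m := 1) (by norm_num)).differentiableAt one_ne_zero
  have hslice : ∀ᶠ b in 𝓝 y, DifferentiableAt ℝ C (x, b) :=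
    (continuousAt_const.prodMk continuousAt_id).eventually
      (hC.eventually_differentiableAt one_le_two)
  have heq : (fun b => fderiv ℝ C (x, b) (1, 0)) =ᶠ[𝓝 y] pdFst C x := by
    filter_upwards [hslice] with b hb using (pdFst_eq_fderiv hb).symm
  rw [hC.copDens_eq_fderiv_fderiv, hC.isSymmSndFDerivAt (by simp)]
  simpa using (hd2.hasDerivAt_comp_prodMk_right.clm_apply (hasDerivAt_const y _))
    |>.congr_of_eventuallyEq heq.symm

theorem ContDiffAt.continuousAt_copDens {p : ℝ × ℝ} (hC : ContDiffAt ℝ 2 C p) :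
    ContinuousAt (uncurry (copDens C)) p := by
  have hfd : ContinuousAt (fun q => fderiv ℝ (fderiv ℝ C) q (1, 0) (0, 1)) p :=
    ((hC.fderiv_right (m := 1) (by norm_num)).fderiv_right (m := 0) le_rfl).continuousAt.clm_apply
      continuousAt_const |>.clm_apply continuousAt_const
  refine hfd.congr ?_
  filter_upwards [hC.eventually (by simp)] with q hq
  exact hq.copDens_eq_fderiv_fderiv.symm

end PartialDerivatives

theorem pdFst_eq_zero_of_forall_Icc {C : ℝ × ℝ → ℝ} {a b x y : ℝ} (hab : a < b)
    (hx : x ∈ Icc a b) (hC : DifferentiableAt ℝ C (x, y)) (h : ∀ t ∈ Icc a b, C (t, y) = 0) :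
    pdFst C x y = 0 := by
  have hd := hC.hasDerivAt_comp_prodMk_left
  rw [pdFst, hd.deriv]
  exact (uniqueDiffOn_Icc hab x hx).eq_deriv _ hd.hasDerivWithinAt
    ((hasDerivWithinAt_const x _ 0).congr h (h x hx))

theorem integral_copDens_pdFst_mul_copDens {C D : ℝ × ℝ → ℝ} {x s a b : ℝ}
    (hD : ∀ t ∈ uIcc a b, ContDiffAt ℝ 2 D (s, t))
    (hC : ∀ t ∈ uIcc a b, ContDiffAt ℝ 2 C (x, pdFst D s t)) :
    ∫ t in a..b, copDens C x (pdFst D s t) * copDens D s t =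
      pdFst C x (pdFst D s b) - pdFst C x (pdFst D s a) := by
  refine integral_eq_sub_of_hasDerivAt
    (fun t ht => (hC t ht).hasDerivAt_pdFst.comp t (hD t ht).hasDerivAt_pdFst)
    (ContinuousOn.intervalIntegrable (continuousOn_of_forall_continuousAt fun t ht => ?_))
  exact ((hC t ht).continuousAt_copDens.comp₂ continuousAt_const
    (hD t ht).hasDerivAt_pdFst.continuousAt).mul
    ((hD t ht).continuousAt_copDens.comp₂ continuousAt_const continuousAt_id)

theorem continuousOn_parametric_intervalIntegral_of_continuousOn {X E : Type*}
    [TopologicalSpace X] [NormedAddCommGroup E] [NormedSpace ℝ E] {f : X → ℝ → E} {s : Set X}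
    {a b c d : ℝ} (hf : ContinuousOn (uncurry f) (s ×ˢ Icc c d)) (ha : a ∈ Icc c d)
    (hb : b ∈ Icc c d) :
    ContinuousOn (fun x => ∫ t in a..b, f x t) s := by
  have hcd : c ≤ d := ha.1.trans ha.2
  -- clamping `t` to `[c, d]` makes the integrand continuous on all of `s × ℝ`
  have hg : Continuous (uncurry fun (x : s) t => f x (projIcc c d hcd t)) :=
    hf.comp_continuous (f := fun q : s × ℝ => ((q.1 : X), (projIcc c d hcd q.2 : ℝ)))
      (by fun_prop) fun q => ⟨q.1.2, (projIcc c d hcd q.2).2⟩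
  rw [continuousOn_iff_continuous_domRestrict]
  refine (continuous_parametric_intervalIntegral_of_continuous' (μ := volume) hg a b).congr
    fun x => ?_
  refine integral_congr fun t ht => ?_
  simp [projIcc_of_mem hcd (uIcc_subset_Icc ha hb ht)]

theorem ContinuousOn.hasDerivAt_integral_of_mem_Ioo {E : Type*} [NormedAddCommGroup E]
    [NormedSpace ℝ E] [CompleteSpace E] {f : ℝ → E} {a b x : ℝ} (hf : ContinuousOn f (Icc a b))
    (hx : x ∈ Ioo a b) :
    HasDerivAt (fun u => ∫ t in a..u, f t) (f x) x :=
  integral_hasDerivAt_right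
    ((hf.mono (uIcc_subset_Icc (left_mem_Icc.2 (hx.1.trans hx.2).le)
      (Ioo_subset_Icc_self hx))).intervalIntegrable)
    ((hf.mono Ioo_subset_Icc_self).stronglyMeasurableAtFilter isOpen_Ioo x hx)
    (hf.continuousAt (Icc_mem_nhds hx.1 hx.2))

section VineCopula

variable {C12 C23 C132 : ℝ × ℝ → ℝ}

theorem integral_copDens_mul_copDens_cond32 {x v2 u3 : ℝ}
    (hC23 : ∀ p ∈ Icc (0 : ℝ) 1 ×ˢ Icc (0 : ℝ) 1, ContDiffAt ℝ 2 C23 p)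
    (hC132 : ∀ p ∈ Icc (0 : ℝ) 1 ×ˢ Icc (0 : ℝ) 1, ContDiffAt ℝ 2 C132 p)
    (hb23 : ∀ t ∈ Icc (0 : ℝ) 1, C23 (t, 0) = 0) (hb132 : ∀ t ∈ Icc (0 : ℝ) 1, C132 (t, 0) = 0)
    (hr32 : ∀ u3 ∈ Icc (0 : ℝ) 1, ∀ u2 ∈ Icc (0 : ℝ) 1, cond32 C23 u3 u2 ∈ Icc (0 : ℝ) 1)
    (hx : x ∈ Icc (0 : ℝ) 1) (hv2 : v2 ∈ Icc (0 : ℝ) 1) (hu3 : u3 ∈ Icc (0 : ℝ) 1) :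
    ∫ v3 in (0 : ℝ)..u3, copDens C23 v2 v3 * copDens C132 x (cond32 C23 v3 v2) =
      pdFst C132 x (cond32 C23 u3 v2) := by
  have hsub : uIcc 0 u3 ⊆ Icc (0 : ℝ) 1 := uIcc_subset_Icc (⟨le_rfl, zero_le_one⟩) hu3
  have hcond : pdFst C23 v2 0 = 0 :=
    pdFst_eq_zero_of_forall_Icc one_pos hv2
      ((hC23 _ ⟨hv2, ⟨le_rfl, zero_le_one⟩⟩).differentiableAt two_ne_zero) hb23
  have hpd : pdFst C132 x 0 = 0 :=
    pdFst_eq_zero_of_forall_Icc one_pos hx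
      ((hC132 _ ⟨hx, ⟨le_rfl, zero_le_one⟩⟩).differentiableAt two_ne_zero) hb132
  calc ∫ v3 in (0 : ℝ)..u3, copDens C23 v2 v3 * copDens C132 x (cond32 C23 v3 v2)
      = ∫ v3 in (0 : ℝ)..u3, copDens C132 x (pdFst C23 v2 v3) * copDens C23 v2 v3 :=
        integral_congr fun _ _ => mul_comm _ _
    _ = pdFst C132 x (pdFst C23 v2 u3) - pdFst C132 x (pdFst C23 v2 0) :=
        integral_copDens_pdFst_mul_copDens (fun t ht => hC23 _ ⟨hv2, hsub ht⟩)
          (fun t ht => hC132 _ ⟨hx, hr32 t (hsub ht) v2 hv2⟩)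
    _ = pdFst C132 x (cond32 C23 u3 v2) := by rw [hcond, hpd, sub_zero]; rfl

theorem vine_eq_integral_integral {a u2 u3 : ℝ}
    (hC23 : ∀ p ∈ Icc (0 : ℝ) 1 ×ˢ Icc (0 : ℝ) 1, ContDiffAt ℝ 2 C23 p)
    (hC132 : ∀ p ∈ Icc (0 : ℝ) 1 ×ˢ Icc (0 : ℝ) 1, ContDiffAt ℝ 2 C132 p)
    (hb23 : ∀ t ∈ Icc (0 : ℝ) 1, C23 (t, 0) = 0) (hb132 : ∀ t ∈ Icc (0 : ℝ) 1, C132 (t, 0) = 0)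
    (hr12 : ∀ u1 ∈ Icc (0 : ℝ) 1, ∀ u2 ∈ Icc (0 : ℝ) 1, cond12 C12 u1 u2 ∈ Icc (0 : ℝ) 1)
    (hr32 : ∀ u3 ∈ Icc (0 : ℝ) 1, ∀ u2 ∈ Icc (0 : ℝ) 1, cond32 C23 u3 u2 ∈ Icc (0 : ℝ) 1)
    (ha : a ∈ Icc (0 : ℝ) 1) (hu2 : u2 ∈ Icc (0 : ℝ) 1) (hu3 : u3 ∈ Icc (0 : ℝ) 1) :
    vine C12 C23 C132 a u2 u3 = ∫ v1 in (0 : ℝ)..a, ∫ v2 in (0 : ℝ)..u2,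
      copDens C12 v1 v2 * pdFst C132 (cond12 C12 v1 v2) (cond32 C23 u3 v2) := by
  refine integral_congr fun v1 hv1 => integral_congr fun v2 hv2 => ?_
  have hv1 := uIcc_subset_Icc (⟨le_rfl, zero_le_one⟩) ha hv1
  have hv2 := uIcc_subset_Icc (⟨le_rfl, zero_le_one⟩) hu2 hv2
  simp only [mul_assoc]
  rw [intervalIntegral.integral_const_mul,
    integral_copDens_mul_copDens_cond32 hC23 hC132 hb23 hb132 hr32 (hr12 v1 hv1 v2 hv2) hv2 hu3]

theorem continuousOn_copDens_mul_pdFst_cond {u3 : ℝ}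
    (hC12 : ∀ p ∈ Icc (0 : ℝ) 1 ×ˢ Icc (0 : ℝ) 1, ContDiffAt ℝ 2 C12 p)
    (hC23 : ∀ p ∈ Icc (0 : ℝ) 1 ×ˢ Icc (0 : ℝ) 1, ContDiffAt ℝ 2 C23 p)
    (hC132 : ∀ p ∈ Icc (0 : ℝ) 1 ×ˢ Icc (0 : ℝ) 1, ContDiffAt ℝ 2 C132 p)
    (hr12 : ∀ u1 ∈ Icc (0 : ℝ) 1, ∀ u2 ∈ Icc (0 : ℝ) 1, cond12 C12 u1 u2 ∈ Icc (0 : ℝ) 1)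
    (hr32 : ∀ u3 ∈ Icc (0 : ℝ) 1, ∀ u2 ∈ Icc (0 : ℝ) 1, cond32 C23 u3 u2 ∈ Icc (0 : ℝ) 1)
    (hu3 : u3 ∈ Icc (0 : ℝ) 1) :
    ContinuousOn (uncurry fun v1 v2 =>
      copDens C12 v1 v2 * pdFst C132 (cond12 C12 v1 v2) (cond32 C23 u3 v2))
      (Icc (0 : ℝ) 1 ×ˢ Icc (0 : ℝ) 1) := by
  refine continuousOn_of_forall_continuousAt fun p hp => ?_
  have hcond32 : ContinuousAt (fun q : ℝ × ℝ => cond32 C23 u3 q.2) p :=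
    ((hC23 _ ⟨hp.2, hu3⟩).of_le one_le_two).continuousAt_pdFst.comp₂ continuousAt_snd
      continuousAt_const
  exact (hC12 p hp).continuousAt_copDens.mul
    (((hC132 _ ⟨hr12 _ hp.1 _ hp.2, hr32 _ hu3 _ hp.2⟩).of_le one_le_two).continuousAt_pdFst.comp₂
      ((hC12 p hp).of_le one_le_two).continuousAt_pdSnd hcond32)

end VineCopula

theorem vine_partial_u1_general
    (C12 C23 C132 : ℝ × ℝ → ℝ)
    (U : Set (ℝ × ℝ)) (hU : IsOpen U)
    (hUsub : Set.Icc ((0 : ℝ), (0 : ℝ)) (1, 1) ⊆ U)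
    (h12 : ContDiffOn ℝ 2 C12 U) (h23 : ContDiffOn ℝ 2 C23 U)
    (h132 : ContDiffOn ℝ 2 C132 U)
    (hb23 : ∀ t ∈ Set.Icc (0:ℝ) 1, C23 (0, t) = 0 ∧ C23 (t, 0) = 0)
    (hb132 : ∀ t ∈ Set.Icc (0:ℝ) 1, C132 (0, t) = 0 ∧ C132 (t, 0) = 0)
    (hr12 : ∀ u1 ∈ Set.Icc (0:ℝ) 1, ∀ u2 ∈ Set.Icc (0:ℝ) 1,
      cond12 C12 u1 u2 ∈ Set.Icc (0:ℝ) 1)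
    (hr32 : ∀ u3 ∈ Set.Icc (0:ℝ) 1, ∀ u2 ∈ Set.Icc (0:ℝ) 1,
      cond32 C23 u3 u2 ∈ Set.Icc (0:ℝ) 1)
    (u1 u2 u3 : ℝ) (hu1 : u1 ∈ Set.Ioo (0:ℝ) 1) (hu2 : u2 ∈ Set.Icc (0:ℝ) 1)
    (hu3 : u3 ∈ Set.Icc (0:ℝ) 1) :
    deriv (fun a => vine C12 C23 C132 a u2 u3) u1 =
      ∫ v2 in (0:ℝ)..u2,
        pdFst C132 (cond12 C12 u1 v2) (cond32 C23 u3 v2) * copDens C12 u1 v2 := by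
  have hsq : ∀ {C : ℝ × ℝ → ℝ}, ContDiffOn ℝ 2 C U →
      ∀ p ∈ Icc (0 : ℝ) 1 ×ˢ Icc (0 : ℝ) 1, ContDiffAt ℝ 2 C p := fun hC p hp =>
    hC.contDiffAt (hU.mem_nhds (hUsub (by rwa [← Icc_prod_Icc])))
  have hb23' t ht := (hb23 t ht).2
  have hb132' t ht := (hb132 t ht).2
  have hvine : (fun a => vine C12 C23 C132 a u2 u3) =ᶠ[𝓝 u1] fun a =>
      ∫ v1 in (0 : ℝ)..a, ∫ v2 in (0 : ℝ)..u2,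
        copDens C12 v1 v2 * pdFst C132 (cond12 C12 v1 v2) (cond32 C23 u3 v2) := by
    filter_upwards [Ioo_mem_nhds hu1.1 hu1.2] with a ha
    exact vine_eq_integral_integral (hsq h23) (hsq h132) hb23' hb132' hr12 hr32
      (Ioo_subset_Icc_self ha) hu2 hu3
  have hmarginal := continuousOn_parametric_intervalIntegral_of_continuousOn
    (continuousOn_copDens_mul_pdFst_cond (hsq h12) (hsq h23) (hsq h132) hr12 hr32 hu3)
    ⟨le_rfl, zero_le_one⟩ hu2
  rw [hvine.deriv_eq, (hmarginal.hasDerivAt_integral_of_mem_Ioo hu1).deriv]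
  exact integral_congr fun v2 _ => mul_comm _ _

/-- ∂C(u₁,u₂,u₃)/∂u₁ = ∫₀^{u₂} ∂₁C₁₃;₂(C_{1|2}(u₁|v₂), C_{3|2}(u₃|v₂)) ⬝ c₁₂(u₁,v₂) dv₂. -/
theorem vine_partial_u1
    (C12 C23 C132 : ℝ × ℝ → ℝ)
    (U : Set (ℝ × ℝ)) (hU : IsOpen U)
    (hUsub : Set.Icc ((0 : ℝ), (0 : ℝ)) (1, 1) ⊆ U)
    (h12 : ContDiffOn ℝ 2 C12 U) (h23 : ContDiffOn ℝ 2 C23 U)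
    (h132 : ContDiffOn ℝ 2 C132 U)
    (hb12 : ∀ t ∈ Set.Icc (0:ℝ) 1, C12 (0, t) = 0 ∧ C12 (t, 0) = 0)
    (hb23 : ∀ t ∈ Set.Icc (0:ℝ) 1, C23 (0, t) = 0 ∧ C23 (t, 0) = 0)
    (hb132 : ∀ t ∈ Set.Icc (0:ℝ) 1, C132 (0, t) = 0 ∧ C132 (t, 0) = 0)
    (hr12 : ∀ u1 ∈ Set.Icc (0:ℝ) 1, ∀ u2 ∈ Set.Icc (0:ℝ) 1,
      cond12 C12 u1 u2 ∈ Set.Icc (0:ℝ) 1)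
    (hr32 : ∀ u3 ∈ Set.Icc (0:ℝ) 1, ∀ u2 ∈ Set.Icc (0:ℝ) 1,
      cond32 C23 u3 u2 ∈ Set.Icc (0:ℝ) 1)
    (u1 u2 u3 : ℝ) (hu1 : u1 ∈ Set.Ioo (0:ℝ) 1) (hu2 : u2 ∈ Set.Icc (0:ℝ) 1)
    (hu3 : u3 ∈ Set.Icc (0:ℝ) 1) :
    deriv (fun a => vine C12 C23 C132 a u2 u3) u1 =
      ∫ v2 in (0:ℝ)..u2,
        pdFst C132 (cond12 C12 u1 v2) (cond32 C23 u3 v2) * copDens C12 u1 v2 :=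
  vine_partial_u1_general C12 C23 C132 U hU hUsub h12 h23 h132 hb23 hb132 hr12 hr32 u1 u2 u3 hu1 hu2
    hu3
end
end

section
/- For all (u_1,u_2,u_3) with u_2 ∈ (0,1) and u_1,u_3 ∈ [0,1], the partial derivative of the three-dimensional vine copula C with respect to u_2 satisfies ∂C(u_1,u_2,u_3)/∂u_2 = C_{13;2}( C_{1|2}(u_1|u_2), C_{3|2}(u_3|u_2) ). -/
noncomputable section

/-!
Put the `v₂`-integral outermost (Fubini) and differentiate in its upper limit: `∂C/∂u₂` is
`∫₀^{u₃} ∫₀^{u₁} c₁₂(v₁,u₂) c₂₃(u₂,v₃) c₁₃;₂(C_{1|2}(v₁|u₂), C_{3|2}(v₃|u₂)) dv₁ dv₃`.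
Since `∂_{v₁} C_{1|2}(v₁|u₂) = c₁₂(v₁,u₂)`, the inner integrand is the `v₁`-derivative of
`c₂₃(u₂,v₃) ∂₃C₁₃;₂(C_{1|2}(v₁|u₂), C_{3|2}(v₃|u₂))`; by symmetry of mixed partials
`∂_{v₃} C_{3|2}(v₃|u₂) = c₂₃(u₂,v₃)`, so the resulting outer integrand is the `v₃`-derivative of
`C₁₃;₂(C_{1|2}(u₁|u₂), C_{3|2}(v₃|u₂))`. The copula boundary conditions kill both lower
boundary terms.
-/

open MeasureTheory Set Filter intervalIntegral

section Calculus

variable {𝕜 F : Type*} [NontriviallyNormedField 𝕜] [NormedAddCommGroup F] [NormedSpace 𝕜 F]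

theorem HasFDerivAt.hasDerivAt_partial_fst {f : 𝕜 × 𝕜 → F} {f' : 𝕜 × 𝕜 →L[𝕜] F} {x y : 𝕜}
    (h : HasFDerivAt f f' (x, y)) : HasDerivAt (fun a => f (a, y)) (f' (1, 0)) x :=
  h.comp_hasDerivAt x ((hasDerivAt_id x).prodMk (hasDerivAt_const x y))

theorem HasFDerivAt.hasDerivAt_partial_snd {f : 𝕜 × 𝕜 → F} {f' : 𝕜 × 𝕜 →L[𝕜] F} {x y : 𝕜}
    (h : HasFDerivAt f f' (x, y)) : HasDerivAt (fun b => f (x, b)) (f' (0, 1)) y :=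
  h.comp_hasDerivAt y ((hasDerivAt_const y x).prodMk (hasDerivAt_id y))

end Calculus

theorem deriv_eq_zero_of_eqOn_Icc {φ : ℝ → ℝ} {a b y : ℝ} (hab : a < b) (hy : y ∈ Icc a b)
    (hφ : EqOn φ 0 (Icc a b)) : deriv φ y = 0 := by
  by_cases hd : DifferentiableAt ℝ φ y
  · have hu : UniqueDiffWithinAt ℝ (Icc a b) y := uniqueDiffOn_Icc hab y hy
    rw [← hd.derivWithin hu, derivWithin_congr hφ (hφ hy)]
    simp
  · exact deriv_zero_of_not_differentiableAt hd

theorem integral_deriv_mul_comp_eq_sub {f f' g g' : ℝ → ℝ} {a b : ℝ}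
    (hf : ∀ x ∈ uIcc a b, HasDerivAt f (f' x) x) (hg : ∀ x ∈ uIcc a b, HasDerivAt g (g' (f x)) (f x))
    (hint : IntervalIntegrable (fun x => f' x * g' (f x)) volume a b) :
    ∫ x in a..b, f' x * g' (f x) = g (f b) - g (f a) :=
  integral_eq_sub_of_hasDerivAt
    (fun x hx => ((hg x hx).comp x (hf x hx)).congr_deriv (mul_comm _ _)) hint

section SecondPartials

variable {C : ℝ × ℝ → ℝ} {U : Set (ℝ × ℝ)} {x y : ℝ}

theorem pdFst_eq_fderiv_s6 (hU : IsOpen U) (hC : ContDiffOn ℝ 2 C U) (hp : (x, y) ∈ U) :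
    pdFst C x y = fderiv ℝ C (x, y) (1, 0) :=
  ((hC.differentiableOn two_ne_zero).differentiableAt (hU.mem_nhds hp)).hasFDerivAt
    |>.hasDerivAt_partial_fst.deriv

theorem pdSnd_eq_fderiv_s6 (hU : IsOpen U) (hC : ContDiffOn ℝ 2 C U) (hp : (x, y) ∈ U) :
    pdSnd C x y = fderiv ℝ C (x, y) (0, 1) :=
  ((hC.differentiableOn two_ne_zero).differentiableAt (hU.mem_nhds hp)).hasFDerivAt
    |>.hasDerivAt_partial_snd.deriv

theorem hasDerivAt_pdSnd (hU : IsOpen U) (hC : ContDiffOn ℝ 2 C U) (hp : (x, y) ∈ U) :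
    HasDerivAt (fun b => C (x, b)) (pdSnd C x y) y :=
  (((hC.differentiableOn two_ne_zero).differentiableAt (hU.mem_nhds hp)).hasFDerivAt
    |>.hasDerivAt_partial_snd).differentiableAt.hasDerivAt

theorem hasFDerivAt_fderiv (hU : IsOpen U) (hC : ContDiffOn ℝ 2 C U) {p : ℝ × ℝ} (hp : p ∈ U) :
    HasFDerivAt (fderiv ℝ C) (fderiv ℝ (fderiv ℝ C) p) p :=
  (((hC.fderiv_of_isOpen hU (m := 1) (by norm_num)).differentiableOn one_ne_zero)
    |>.differentiableAt (hU.mem_nhds hp)).hasFDerivAt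

theorem hasDerivAt_pdSnd_fst (hU : IsOpen U) (hC : ContDiffOn ℝ 2 C U) (hp : (x, y) ∈ U) :
    HasDerivAt (fun a => pdSnd C a y) (fderiv ℝ (fderiv ℝ C) (x, y) (1, 0) (0, 1)) x := by
  have h := (hasFDerivAt_fderiv hU hC hp).hasDerivAt_partial_fst.clm_apply
    (hasDerivAt_const x ((0 : ℝ), (1 : ℝ)))
  simp only [map_zero, add_zero] at h
  refine h.congr_of_eventuallyEq ?_
  filter_upwards [(hU.preimage (by fun_prop : Continuous fun a : ℝ => (a, y))).mem_nhds hp]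
    with a ha using pdSnd_eq_fderiv_s6 hU hC ha

theorem hasDerivAt_pdFst_snd (hU : IsOpen U) (hC : ContDiffOn ℝ 2 C U) (hp : (x, y) ∈ U) :
    HasDerivAt (fun b => pdFst C x b) (fderiv ℝ (fderiv ℝ C) (x, y) (0, 1) (1, 0)) y := by
  have h := (hasFDerivAt_fderiv hU hC hp).hasDerivAt_partial_snd.clm_apply
    (hasDerivAt_const y ((1 : ℝ), (0 : ℝ)))
  simp only [map_zero, add_zero] at h
  refine h.congr_of_eventuallyEq ?_
  filter_upwards [(hU.preimage (by fun_prop : Continuous fun b : ℝ => (x, b))).mem_nhds hp]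
    with b hb using pdFst_eq_fderiv_s6 hU hC hb

theorem copDens_eq_fderiv (hU : IsOpen U) (hC : ContDiffOn ℝ 2 C U) (hp : (x, y) ∈ U) :
    copDens C x y = fderiv ℝ (fderiv ℝ C) (x, y) (1, 0) (0, 1) :=
  (hasDerivAt_pdSnd_fst hU hC hp).deriv

theorem hasDerivAt_pdSnd_copDens (hU : IsOpen U) (hC : ContDiffOn ℝ 2 C U) (hp : (x, y) ∈ U) :
    HasDerivAt (fun a => pdSnd C a y) (copDens C x y) x :=
  copDens_eq_fderiv hU hC hp ▸ hasDerivAt_pdSnd_fst hU hC hp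

theorem hasDerivAt_pdFst_copDens (hU : IsOpen U) (hC : ContDiffOn ℝ 2 C U) (hp : (x, y) ∈ U) :
    HasDerivAt (fun b => pdFst C x b) (copDens C x y) y := by
  rw [copDens_eq_fderiv hU hC hp,
    (hC.contDiffAt (hU.mem_nhds hp)).isSymmSndFDerivAt (by simp)]
  exact hasDerivAt_pdFst_snd hU hC hp

theorem continuousOn_pdFst (hU : IsOpen U) (hC : ContDiffOn ℝ 2 C U) :
    ContinuousOn (fun p : ℝ × ℝ => pdFst C p.1 p.2) U :=
  ((hC.continuousOn_fderiv_of_isOpen hU (by norm_num)).clm_apply continuousOn_const).congr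
    fun _ hp => pdFst_eq_fderiv_s6 hU hC hp

theorem continuousOn_pdSnd (hU : IsOpen U) (hC : ContDiffOn ℝ 2 C U) :
    ContinuousOn (fun p : ℝ × ℝ => pdSnd C p.1 p.2) U :=
  ((hC.continuousOn_fderiv_of_isOpen hU (by norm_num)).clm_apply continuousOn_const).congr
    fun _ hp => pdSnd_eq_fderiv_s6 hU hC hp

theorem continuousOn_copDens (hU : IsOpen U) (hC : ContDiffOn ℝ 2 C U) :
    ContinuousOn (fun p : ℝ × ℝ => copDens C p.1 p.2) U :=
  ((((hC.fderiv_of_isOpen hU (m := 1) (by norm_num)).continuousOn_fderiv_of_isOpen hU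
    le_rfl).clm_apply continuousOn_const).clm_apply continuousOn_const).congr
    fun _ hp => copDens_eq_fderiv hU hC hp

end SecondPartials

theorem intervalIntegral_swap_of_continuous {E : Type*} [NormedAddCommGroup E] [NormedSpace ℝ E]
    {F : ℝ → ℝ → E} (hF : Continuous (Function.uncurry F)) (a b c d : ℝ) :
    ∫ x in a..b, ∫ y in c..d, F x y = ∫ y in c..d, ∫ x in a..b, F x y :=
  intervalIntegral_intervalIntegral_swap <|
    (hF.continuousOn.integrableOn_compact (isCompact_uIcc.prod isCompact_uIcc)).mono_set
      (prod_mono uIoc_subset_uIcc uIoc_subset_uIcc)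

theorem hasDerivAt_integral_integral_integral_middle {E : Type*} [NormedAddCommGroup E]
    [NormedSpace ℝ E] [CompleteSpace E] {F : ℝ × ℝ × ℝ → E} (hF : Continuous F)
    (a₀ a b₀ b c₀ c : ℝ) :
    HasDerivAt (fun t => ∫ v₁ in a₀..a, ∫ v₂ in b₀..t, ∫ v₃ in c₀..c, F (v₁, v₂, v₃))
      (∫ v₃ in c₀..c, ∫ v₁ in a₀..a, F (v₁, b, v₃)) b := by
  have hG : Continuous fun p : ℝ × ℝ => ∫ v₃ in c₀..c, F (p.1, p.2, v₃) :=
    continuous_parametric_intervalIntegral_of_continuous' (by fun_prop) _ _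
  have hH : Continuous fun v₂ => ∫ v₁ in a₀..a, ∫ v₃ in c₀..c, F (v₁, v₂, v₃) :=
    continuous_parametric_intervalIntegral_of_continuous'
      (f := fun v₂ v₁ => ∫ v₃ in c₀..c, F (v₁, v₂, v₃)) (hG.comp continuous_swap) _ _
  rw [← intervalIntegral_swap_of_continuous (F := fun v₁ v₃ => F (v₁, b, v₃)) (by fun_prop)]
  refine (hH.integral_hasStrictDerivAt b₀ b).hasDerivAt.congr_of_eventuallyEq
    (Eventually.of_forall fun t => ?_)
  exact intervalIntegral_swap_of_continuous (F := fun v₁ v₂ => ∫ v₃ in c₀..c, F (v₁, v₂, v₃))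
    hG _ _ _ _

theorem hasDerivAt_integral_integral_integral_middle_of_continuousOn {F : ℝ × ℝ × ℝ → ℝ}
    (hF : ContinuousOn F (Icc 0 1 ×ˢ Icc 0 1 ×ˢ Icc 0 1)) {a b c : ℝ} (ha : a ∈ Icc (0 : ℝ) 1)
    (hb : b ∈ Ioo (0 : ℝ) 1) (hc : c ∈ Icc (0 : ℝ) 1) :
    HasDerivAt (fun t => ∫ v₁ in (0 : ℝ)..a, ∫ v₂ in (0 : ℝ)..t, ∫ v₃ in (0 : ℝ)..c, F (v₁, v₂, v₃))
      (∫ v₃ in (0 : ℝ)..c, ∫ v₁ in (0 : ℝ)..a, F (v₁, b, v₃)) b := by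
  obtain ⟨G, hGF⟩ := ContinuousMap.exists_restrict_eq
    (isClosed_Icc.prod (isClosed_Icc.prod isClosed_Icc)) ⟨_, hF.domRestrict⟩
  have hFG : ∀ v ∈ Icc (0 : ℝ) 1 ×ˢ Icc (0 : ℝ) 1 ×ˢ Icc (0 : ℝ) 1, F v = G v :=
    fun v hv => (ContinuousMap.congr_fun hGF ⟨v, hv⟩).symm
  have hsub : ∀ {s : ℝ}, s ∈ Icc (0 : ℝ) 1 → uIcc 0 s ⊆ Icc 0 1 := fun hs =>
    (uIcc_of_le hs.1).symm ▸ Icc_subset_Icc_right hs.2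
  have hval : (∫ v₃ in (0 : ℝ)..c, ∫ v₁ in (0 : ℝ)..a, F (v₁, b, v₃))
      = ∫ v₃ in (0 : ℝ)..c, ∫ v₁ in (0 : ℝ)..a, G (v₁, b, v₃) :=
    integral_congr fun v₃ h₃ => integral_congr fun v₁ h₁ =>
      hFG _ ⟨hsub ha h₁, Ioo_subset_Icc_self hb, hsub hc h₃⟩
  rw [hval]
  refine (hasDerivAt_integral_integral_integral_middle G.continuous 0 a 0 b 0 c)
    |>.congr_of_eventuallyEq ?_
  filter_upwards [Ioo_mem_nhds hb.1 hb.2] with t ht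
  exact integral_congr fun v₁ h₁ => integral_congr fun v₂ h₂ => integral_congr fun v₃ h₃ =>
    hFG _ ⟨hsub ha h₁, hsub (Ioo_subset_Icc_self ht) h₂, hsub hc h₃⟩

def vineDensity (C12 C23 C132 : ℝ × ℝ → ℝ) (v : ℝ × ℝ × ℝ) : ℝ :=
  copDens C12 v.1 v.2.1 * copDens C23 v.2.1 v.2.2 *
    copDens C132 (cond12 C12 v.1 v.2.1) (cond32 C23 v.2.2 v.2.1)

section Vine

variable {C12 C23 C132 : ℝ × ℝ → ℝ} {U : Set (ℝ × ℝ)}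

theorem continuousOn_vineDensity (hU : IsOpen U) (hsq : Icc (0 : ℝ) 1 ×ˢ Icc (0 : ℝ) 1 ⊆ U)
    (h12 : ContDiffOn ℝ 2 C12 U) (h23 : ContDiffOn ℝ 2 C23 U) (h132 : ContDiffOn ℝ 2 C132 U)
    (hr12 : ∀ u1 ∈ Icc (0 : ℝ) 1, ∀ u2 ∈ Icc (0 : ℝ) 1, cond12 C12 u1 u2 ∈ Icc (0 : ℝ) 1)
    (hr32 : ∀ u3 ∈ Icc (0 : ℝ) 1, ∀ u2 ∈ Icc (0 : ℝ) 1, cond32 C23 u3 u2 ∈ Icc (0 : ℝ) 1) :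
    ContinuousOn (vineDensity C12 C23 C132) (Icc 0 1 ×ˢ Icc 0 1 ×ˢ Icc 0 1) := by
  have h₁₂ : MapsTo (fun v : ℝ × ℝ × ℝ => (v.1, v.2.1)) (Icc 0 1 ×ˢ Icc 0 1 ×ˢ Icc 0 1) U :=
    fun v hv => hsq ⟨hv.1, hv.2.1⟩
  have h₂₃ : MapsTo (fun v : ℝ × ℝ × ℝ => (v.2.1, v.2.2)) (Icc 0 1 ×ˢ Icc 0 1 ×ˢ Icc 0 1) U :=
    fun v hv => hsq ⟨hv.2.1, hv.2.2⟩
  have hA : ContinuousOn (fun v : ℝ × ℝ × ℝ => cond12 C12 v.1 v.2.1)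
      (Icc 0 1 ×ˢ Icc 0 1 ×ˢ Icc 0 1) :=
    (continuousOn_pdSnd hU h12).comp (by fun_prop) h₁₂
  have hB : ContinuousOn (fun v : ℝ × ℝ × ℝ => cond32 C23 v.2.2 v.2.1)
      (Icc 0 1 ×ˢ Icc 0 1 ×ˢ Icc 0 1) :=
    (continuousOn_pdFst hU h23).comp (by fun_prop) h₂₃
  exact (((continuousOn_copDens hU h12).comp (by fun_prop) h₁₂).mul
    ((continuousOn_copDens hU h23).comp (by fun_prop) h₂₃)).mul
    ((continuousOn_copDens hU h132).comp (hA.prodMk hB)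
      fun v hv => hsq ⟨hr12 _ hv.1 _ hv.2.1, hr32 _ hv.2.2 _ hv.2.1⟩)

theorem integral_copDens_mul_copDens_cond12 (hU : IsOpen U)
    (hsq : Icc (0 : ℝ) 1 ×ˢ Icc (0 : ℝ) 1 ⊆ U)
    (h12 : ContDiffOn ℝ 2 C12 U) (h132 : ContDiffOn ℝ 2 C132 U)
    (hb12 : ∀ t ∈ Icc (0 : ℝ) 1, C12 (0, t) = 0) (hb132 : ∀ t ∈ Icc (0 : ℝ) 1, C132 (0, t) = 0)
    (hr12 : ∀ u1 ∈ Icc (0 : ℝ) 1, ∀ u2 ∈ Icc (0 : ℝ) 1, cond12 C12 u1 u2 ∈ Icc (0 : ℝ) 1)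
    {u1 u2 y : ℝ} (hu1 : u1 ∈ Icc (0 : ℝ) 1) (hu2 : u2 ∈ Icc (0 : ℝ) 1) (hy : y ∈ Icc (0 : ℝ) 1) :
    ∫ v in (0 : ℝ)..u1, copDens C12 v u2 * copDens C132 (cond12 C12 v u2) y
      = pdSnd C132 (cond12 C12 u1 u2) y := by
  have hsub : uIcc 0 u1 ⊆ Icc (0 : ℝ) 1 := (uIcc_of_le hu1.1).symm ▸ Icc_subset_Icc_right hu1.2
  have hA : MapsTo (fun v => (v, u2)) (uIcc 0 u1) U := fun v hv => hsq ⟨hsub hv, hu2⟩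
  have hAy : MapsTo (fun v => (cond12 C12 v u2, y)) (uIcc 0 u1) U :=
    fun v hv => hsq ⟨hr12 _ (hsub hv) _ hu2, hy⟩
  have hA0 : cond12 C12 0 u2 = 0 := deriv_eq_zero_of_eqOn_Icc one_pos hu2 hb12
  have h0 : pdSnd C132 0 y = 0 := deriv_eq_zero_of_eqOn_Icc one_pos hy hb132
  have hint : IntervalIntegrable (fun v => copDens C12 v u2 * copDens C132 (cond12 C12 v u2) y)
      volume 0 u1 :=
    (((continuousOn_copDens hU h12).comp (by fun_prop) hA).mul
      ((continuousOn_copDens hU h132).comp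
        (((continuousOn_pdSnd hU h12).comp (by fun_prop) hA).prodMk continuousOn_const)
        hAy)).intervalIntegrable
  rw [integral_deriv_mul_comp_eq_sub (f := fun v => cond12 C12 v u2)
      (g := fun x => pdSnd C132 x y) (g' := fun x => copDens C132 x y)
      (fun v hv => hasDerivAt_pdSnd_copDens hU h12 (hA hv))
      (fun v hv => hasDerivAt_pdSnd_copDens hU h132 (hAy hv)) hint,
    hA0, h0, sub_zero]

theorem integral_copDens_mul_pdSnd_cond32 (hU : IsOpen U)
    (hsq : Icc (0 : ℝ) 1 ×ˢ Icc (0 : ℝ) 1 ⊆ U)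
    (h23 : ContDiffOn ℝ 2 C23 U) (h132 : ContDiffOn ℝ 2 C132 U)
    (hb23 : ∀ t ∈ Icc (0 : ℝ) 1, C23 (t, 0) = 0) (hb132 : ∀ t ∈ Icc (0 : ℝ) 1, C132 (t, 0) = 0)
    (hr32 : ∀ u3 ∈ Icc (0 : ℝ) 1, ∀ u2 ∈ Icc (0 : ℝ) 1, cond32 C23 u3 u2 ∈ Icc (0 : ℝ) 1)
    {x u2 u3 : ℝ} (hx : x ∈ Icc (0 : ℝ) 1) (hu2 : u2 ∈ Icc (0 : ℝ) 1) (hu3 : u3 ∈ Icc (0 : ℝ) 1) :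
    ∫ v in (0 : ℝ)..u3, copDens C23 u2 v * pdSnd C132 x (cond32 C23 v u2)
      = C132 (x, cond32 C23 u3 u2) := by
  have hsub : uIcc 0 u3 ⊆ Icc (0 : ℝ) 1 := (uIcc_of_le hu3.1).symm ▸ Icc_subset_Icc_right hu3.2
  have hB : MapsTo (fun v => (u2, v)) (uIcc 0 u3) U := fun v hv => hsq ⟨hu2, hsub hv⟩
  have hxB : MapsTo (fun v => (x, cond32 C23 v u2)) (uIcc 0 u3) U :=
    fun v hv => hsq ⟨hx, hr32 _ (hsub hv) _ hu2⟩
  have hB0 : cond32 C23 0 u2 = 0 := deriv_eq_zero_of_eqOn_Icc one_pos hu2 hb23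
  have hint : IntervalIntegrable (fun v => copDens C23 u2 v * pdSnd C132 x (cond32 C23 v u2))
      volume 0 u3 :=
    (((continuousOn_copDens hU h23).comp (by fun_prop) hB).mul
      ((continuousOn_pdSnd hU h132).comp
        (continuousOn_const.prodMk ((continuousOn_pdFst hU h23).comp (by fun_prop) hB))
        hxB)).intervalIntegrable
  rw [integral_deriv_mul_comp_eq_sub (f := fun v => cond32 C23 v u2)
      (g := fun z => C132 (x, z)) (g' := fun z => pdSnd C132 x z)
      (fun v hv => hasDerivAt_pdFst_copDens hU h23 (hB hv))
      (fun v hv => hasDerivAt_pdSnd hU h132 (hxB hv)) hint,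
    hB0, hb132 x hx, sub_zero]

end Vine

/-- ∂C(u₁,u₂,u₃)/∂u₂ = C₁₃;₂(C_{1|2}(u₁|u₂), C_{3|2}(u₃|u₂)). -/
theorem vine_partial_u2
    (C12 C23 C132 : ℝ × ℝ → ℝ)
    (U : Set (ℝ × ℝ)) (hU : IsOpen U)
    (hUsub : Set.Icc ((0 : ℝ), (0 : ℝ)) (1, 1) ⊆ U)
    (h12 : ContDiffOn ℝ 2 C12 U) (h23 : ContDiffOn ℝ 2 C23 U)
    (h132 : ContDiffOn ℝ 2 C132 U)
    (hb12 : ∀ t ∈ Set.Icc (0:ℝ) 1, C12 (0, t) = 0 ∧ C12 (t, 0) = 0)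
    (hb23 : ∀ t ∈ Set.Icc (0:ℝ) 1, C23 (0, t) = 0 ∧ C23 (t, 0) = 0)
    (hb132 : ∀ t ∈ Set.Icc (0:ℝ) 1, C132 (0, t) = 0 ∧ C132 (t, 0) = 0)
    (hr12 : ∀ u1 ∈ Set.Icc (0:ℝ) 1, ∀ u2 ∈ Set.Icc (0:ℝ) 1,
      cond12 C12 u1 u2 ∈ Set.Icc (0:ℝ) 1)
    (hr32 : ∀ u3 ∈ Set.Icc (0:ℝ) 1, ∀ u2 ∈ Set.Icc (0:ℝ) 1,
      cond32 C23 u3 u2 ∈ Set.Icc (0:ℝ) 1)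
    (u1 u2 u3 : ℝ) (hu1 : u1 ∈ Set.Icc (0:ℝ) 1) (hu2 : u2 ∈ Set.Ioo (0:ℝ) 1)
    (hu3 : u3 ∈ Set.Icc (0:ℝ) 1) :
    deriv (fun b => vine C12 C23 C132 u1 b u3) u2 =
      C132 (cond12 C12 u1 u2, cond32 C23 u3 u2) := by
  have hsq : Icc (0 : ℝ) 1 ×ˢ Icc (0 : ℝ) 1 ⊆ U := by rwa [Icc_prod_Icc]
  have hu2' : u2 ∈ Icc (0 : ℝ) 1 := Ioo_subset_Icc_self hu2
  have hsub : uIcc 0 u3 ⊆ Icc (0 : ℝ) 1 := (uIcc_of_le hu3.1).symm ▸ Icc_subset_Icc_right hu3.2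
  refine (hasDerivAt_integral_integral_integral_middle_of_continuousOn
    (continuousOn_vineDensity hU hsq h12 h23 h132 hr12 hr32) hu1 hu2 hu3).deriv.trans ?_
  calc (∫ v₃ in (0 : ℝ)..u3, ∫ v₁ in (0 : ℝ)..u1, vineDensity C12 C23 C132 (v₁, u2, v₃))
      = ∫ v₃ in (0 : ℝ)..u3,
          copDens C23 u2 v₃ * pdSnd C132 (cond12 C12 u1 u2) (cond32 C23 v₃ u2) := by
        refine integral_congr fun v₃ hv₃ => ?_
        rw [← integral_copDens_mul_copDens_cond12 hU hsq h12 h132 (fun t ht => (hb12 t ht).1)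
          (fun t ht => (hb132 t ht).1) hr12 hu1 hu2' (hr32 _ (hsub hv₃) _ hu2'),
          ← intervalIntegral.integral_const_mul]
        refine integral_congr fun v₁ _ => ?_
        simp only [vineDensity]
        ring
    _ = C132 (cond12 C12 u1 u2, cond32 C23 u3 u2) :=
        integral_copDens_mul_pdSnd_cond32 hU hsq h23 h132 (fun t ht => (hb23 t ht).2)
          (fun t ht => (hb132 t ht).2) hr32 (hr12 _ hu1 _ hu2') hu2' hu3

end
end
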